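/- Let B ⊆ kQ be an admissible subcoalgebra homogeneous with respect to the G-grading determined by a connected arrow weighting δ: Q₁ → G, and let B ⋊ kG ⊆ kQ ⋊ kG be the span of elements b ⋊ g with b ∈ B homogeneous and g ∈ G. Then B ⋊ kG is a subcoalgebra of kQ ⋊ kG, and the projection F(b ⋊ g) = b restricts to a surjective coalgebra homomorphism B ⋊ kG → B. -/

import Mathlib

open TensorProduct Quiver

noncomputable section
open scoped Classical

universe u v

variable (k : Type*) [Field k]

/-- The set of all paths in a quiver, with endpoints bundled. -/
abbrev PathsIn (V : Type u) [Quiver.{v + 1} V] : Type (max u (v + 1)) := Σ a b : V, Quiver.Path a b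

/-- The underlying vector space of the path coalgebra: the free `k`-module on paths. -/
abbrev PathCoalg (V : Type u) [Quiver.{v + 1} V] : Type _ := PathsIn V →₀ k

variable {V : Type u} [Quiver.{v + 1} V]

/-- The basis vector corresponding to a path. -/
def ιp (t : PathsIn V) : PathCoalg k V := Finsupp.single t 1

/-- The linear map on the path coalgebra induced by appending the arrow `e` to
paths ending at the source of `e` (and killing all other paths). -/
def consMap {b c : V} (e : b ⟶ c) : PathCoalg k V →ₗ[k] PathCoalg k V :=
  Finsupp.lsum k fun t =>
    if h : t.2.1 = b then Finsupp.lsingle ⟨t.1, c, (h ▸ t.2.2).cons e⟩ else 0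

/-- Comultiplication on basis paths:
`Δ(p) = Σ_{p = p₂p₁} p₂ ⊗ p₁ + t(p) ⊗ p + p ⊗ s(p)`, i.e. the sum of
`(second segment) ⊗ (first segment)` over all (possibly trivial) decompositions. -/
def deltaAux : ∀ {a b : V}, Quiver.Path a b → PathCoalg k V ⊗[k] PathCoalg k V
  | a, _, .nil => ιp k ⟨a, a, .nil⟩ ⊗ₜ[k] ιp k ⟨a, a, .nil⟩
  | a, c, .cons p e =>
      ιp k ⟨c, c, .nil⟩ ⊗ₜ[k] ιp k ⟨a, c, p.cons e⟩
      + TensorProduct.map (consMap k e) LinearMap.id (deltaAux p)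

/-- The comultiplication of the path coalgebra. -/
def ΔP : PathCoalg k V →ₗ[k] PathCoalg k V ⊗[k] PathCoalg k V :=
  Finsupp.lsum k fun t => LinearMap.toSpanSingleton k _ (deltaAux k t.2.2)

/-- The counit of the path coalgebra: `ε(p) = δ_{|p|,0}`. -/
def εP : PathCoalg k V →ₗ[k] k :=
  Finsupp.lsum k fun t => if t.2.2.length = 0 then LinearMap.id else 0

variable {G : Type*} [Group G]

/-- The multiplicative extension of an arrow weighting `δ : Q₁ → G` to paths:
`δ(a_n ⋯ a_1) = δ(a_n) ⋯ δ(a_1)`, with value `1` on length-zero paths. -/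
def wt (δ : ∀ {a b : V}, (a ⟶ b) → G) : ∀ {a b : V}, Quiver.Path a b → G
  | _, _, .nil => 1
  | _, _, .cons p e => δ e * wt @δ p

/-- The subspace of a tensor product spanned by elementary tensors from two
given submodules; this plays the role of `A ⊗ B` inside `M ⊗ N`. -/
def tsub {M N : Type*} [AddCommGroup M] [Module k M] [AddCommGroup N] [Module k N]
    (A : Submodule k M) (B : Submodule k N) : Submodule k (M ⊗[k] N) :=
  Submodule.span k {x | ∃ a ∈ A, ∃ b ∈ B, x = a ⊗ₜ[k] b}

/-- The underlying vector space of the smash coproduct coalgebra `kQ ⋊ kG`: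
the free `k`-module on symbols `p ⋊ g`. -/
abbrev SmashCoalg (V : Type u) [Quiver.{v + 1} V] (G : Type*) : Type _ :=
  (PathsIn V × G) →₀ k

/-- The basis vector `p ⋊ g`. -/
def ιs (t : PathsIn V × G) : SmashCoalg k V G := Finsupp.single t 1

/-- Appending the arrow `e` to the path component of basis vectors `p ⋊ g`
(for `p` ending at the source of `e`), leaving the group component unchanged. -/
def consMapS {b c : V} (e : b ⟶ c) : SmashCoalg k V G →ₗ[k] SmashCoalg k V G :=
  Finsupp.lsum k fun t =>
    if h : t.1.2.1 = b then Finsupp.lsingle (⟨t.1.1, c, (h ▸ t.1.2.2).cons e⟩, t.2) else 0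

/-- The value of the smash comultiplication on the basis vector `p ⋊ g`:
`Δ(p ⋊ g) = Σ_{p = rq} (r ⋊ δ(q)g) ⊗ (q ⋊ g)`, where `q` runs over initial
segments of `p` (including the trivial decompositions). -/
def smashDeltaAux (δ : ∀ {a b : V}, (a ⟶ b) → G) (g : G) :
    ∀ {a b : V}, Quiver.Path a b → SmashCoalg k V G ⊗[k] SmashCoalg k V G
  | a, _, .nil => ιs k (⟨a, a, .nil⟩, g) ⊗ₜ[k] ιs k (⟨a, a, .nil⟩, g)
  | a, c, .cons p e =>
      ιs k (⟨c, c, .nil⟩, wt @δ (p.cons e) * g) ⊗ₜ[k] ιs k (⟨a, c, p.cons e⟩, g)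
      + TensorProduct.map (consMapS k e) LinearMap.id (smashDeltaAux @δ g p)

/-- The comultiplication of the smash coproduct coalgebra `kQ ⋊ kG`. -/
def smashDelta (δ : ∀ {a b : V}, (a ⟶ b) → G) :
    SmashCoalg k V G →ₗ[k] SmashCoalg k V G ⊗[k] SmashCoalg k V G :=
  Finsupp.lsum k fun t => LinearMap.toSpanSingleton k _ (smashDeltaAux k @δ t.2 t.1.2.2)

/-- The counit of `kQ ⋊ kG`: `ε(p ⋊ g) = δ_{|p|,0}`. -/
def smashEps : SmashCoalg k V G →ₗ[k] k :=
  Finsupp.lsum k fun t => if t.1.2.2.length = 0 then LinearMap.id else 0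

/-- The canonical projection `kQ ⋊ kG → kQ`, `p ⋊ g ↦ p`. -/
def smashProj : SmashCoalg k V G →ₗ[k] PathCoalg k V :=
  Finsupp.lsum k fun t => Finsupp.lsingle t.1

/-- The linear embedding `kQ → kQ ⋊ kG`, `b ↦ b ⋊ g`. -/
def embG (g : G) : PathCoalg k V →ₗ[k] SmashCoalg k V G :=
  Finsupp.lsum k fun t => Finsupp.lsingle (t, g)

/-- The weight of a walk (a path in the symmetrification of `Q`):
arrows contribute their weight and reversed arrows the inverse weight. -/
def wtWalk (δ : ∀ {a b : V}, (a ⟶ b) → G) :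
    ∀ {a b : Quiver.Symmetrify V}, Quiver.Path a b → G
  | _, _, .nil => 1
  | _, _, .cons p e =>
      (Sum.elim (fun f => δ f) (fun f => (δ f)⁻¹) e) * wtWalk @δ p

/-- The subspace `B ⋊ kG ⊆ kQ ⋊ kG`: the span of the elements `b ⋊ g` with
`b ∈ B` homogeneous and `g ∈ G`. -/
def BsmashG (δ : ∀ {a b : V}, (a ⟶ b) → G) (B : Submodule k (PathCoalg k V)) :
    Submodule k (SmashCoalg k V G) :=
  Submodule.span k
    {z | ∃ (g gg : G) (b : PathCoalg k V), b ∈ B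
      ∧ (∀ t ∈ b.support, wt @δ t.2.2 = gg) ∧ z = embG k g b}

/-!
The comultiplication of `kQ ⋊ kG` is that of `kQ` twisted by weights: `Δ(b ⋊ g)` is the image
of `Δ(b)` under `r ⊗ q ↦ (r ⋊ δ(q)g) ⊗ (q ⋊ g)`. For `b ∈ B` we have `Δ(b) ∈ B ⊗ B`, and since `B`
is homogeneous every elementary tensor `r ⊗ c` there splits into tensors `r ⊗ c_h` with `c_h ∈ B`
homogeneous of degree `h`; such a tensor is sent to `(r ⋊ hg) ⊗ (c_h ⋊ g)`, and `r ⋊ hg` lies in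
`B ⋊ kG` after splitting `r` into homogeneous components in turn. The projection is onto because
it sends `b ⋊ 1` to `b`.
-/

section

variable {k}

def weightTwist (δ : ∀ {a b : V}, (a ⟶ b) → G) (g : G) :
    PathCoalg k V ⊗[k] PathCoalg k V →ₗ[k] SmashCoalg k V G ⊗[k] SmashCoalg k V G :=
  TensorProduct.lift <| Finsupp.lsum k fun r => LinearMap.toSpanSingleton k _ <|
    Finsupp.lsum k fun q => LinearMap.toSpanSingleton k _ <|
      ιs k (r, wt @δ q.2.2 * g) ⊗ₜ[k] ιs k (q, g)

variable (k)

theorem single_eq_smul_ιp (t : PathsIn V) (c : k) : Finsupp.single t c = c • ιp k t := by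
  simp [ιp]

theorem weightTwist_ιp_tmul_ιp (δ : ∀ {a b : V}, (a ⟶ b) → G) (g : G) (r q : PathsIn V) :
    weightTwist @δ g (ιp k r ⊗ₜ[k] ιp k q) = ιs k (r, wt @δ q.2.2 * g) ⊗ₜ[k] ιs k (q, g) := by
  simp [weightTwist, ιp]

theorem embG_ιp {Γ : Type*} (g : Γ) (t : PathsIn V) : embG k g (ιp k t) = ιs k (t, g) := by
  simp [embG, ιp, ιs]

theorem smashProj_embG {Γ : Type*} (g : Γ) (b : PathCoalg k V) : smashProj k (embG k g b) = b := by
  induction b using Finsupp.induction_linear with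
  | zero => simp
  | add x y hx hy => simp only [map_add, hx, hy]
  | single t c => simp [embG, smashProj]

theorem ΔP_ιp (t : PathsIn V) : ΔP k (ιp k t) = deltaAux k t.2.2 := by
  simp [ΔP, ιp]

theorem smashDelta_ιs (δ : ∀ {a b : V}, (a ⟶ b) → G) (g : G) (t : PathsIn V) :
    smashDelta k @δ (ιs k (t, g)) = smashDeltaAux k @δ g t.2.2 := by
  simp [smashDelta, ιs]

theorem weightTwist_map_consMap (δ : ∀ {a b : V}, (a ⟶ b) → G) (g : G) {b c : V} (e : b ⟶ c)
    (x : PathCoalg k V ⊗[k] PathCoalg k V) :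
    weightTwist @δ g (TensorProduct.map (consMap k e) LinearMap.id x)
      = TensorProduct.map (consMapS k e) LinearMap.id (weightTwist @δ g x) := by
  suffices h : (weightTwist @δ g).comp (TensorProduct.map (consMap k e) LinearMap.id)
      = (TensorProduct.map (consMapS k e) LinearMap.id).comp (weightTwist @δ g) from
    LinearMap.congr_fun h x
  ext r q
  change weightTwist @δ g (TensorProduct.map (consMap k e) LinearMap.id (ιp k r ⊗ₜ[k] ιp k q))
    = TensorProduct.map (consMapS k e) LinearMap.id (weightTwist @δ g (ιp k r ⊗ₜ[k] ιp k q))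
  rw [weightTwist_ιp_tmul_ιp, TensorProduct.map_tmul, TensorProduct.map_tmul]
  by_cases h : r.2.1 = b
  · have hcons : consMap k e (ιp k r) = ιp k ⟨r.1, c, (h ▸ r.2.2).cons e⟩ := by
      simp [consMap, ιp, h]
    have hconsS : consMapS k e (ιs k (r, wt @δ q.2.2 * g))
        = ιs k (⟨r.1, c, (h ▸ r.2.2).cons e⟩, wt @δ q.2.2 * g) := by
      simp [consMapS, ιs, h]
    rw [hcons, hconsS, LinearMap.id_apply, LinearMap.id_apply, weightTwist_ιp_tmul_ιp]
  · simp [consMap, consMapS, ιp, ιs, h]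

theorem smashDeltaAux_eq_weightTwist (δ : ∀ {a b : V}, (a ⟶ b) → G) (g : G) :
    ∀ {a b : V} (p : Quiver.Path a b),
      smashDeltaAux k @δ g p = weightTwist @δ g (deltaAux k p)
  | _, _, .nil => by
      rw [smashDeltaAux, deltaAux, weightTwist_ιp_tmul_ιp, wt, one_mul]
  | _, _, .cons p e => by
      rw [smashDeltaAux, deltaAux, map_add, weightTwist_ιp_tmul_ιp, weightTwist_map_consMap,
        smashDeltaAux_eq_weightTwist δ g p]

theorem smashDelta_embG (δ : ∀ {a b : V}, (a ⟶ b) → G) (g : G) (b : PathCoalg k V) :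
    smashDelta k @δ (embG k g b) = weightTwist @δ g (ΔP k b) := by
  suffices h : (smashDelta k @δ).comp (embG k g) = (weightTwist @δ g).comp (ΔP k) from
    LinearMap.congr_fun h b
  ext t
  change smashDelta k @δ (embG k g (ιp k t)) = weightTwist @δ g (ΔP k (ιp k t))
  rw [embG_ιp, smashDelta_ιs, ΔP_ιp, smashDeltaAux_eq_weightTwist]

theorem weightTwist_tmul_ιp (δ : ∀ {a b : V}, (a ⟶ b) → G) (g : G) (b : PathCoalg k V)
    (q : PathsIn V) :
    weightTwist @δ g (b ⊗ₜ[k] ιp k q) = embG k (wt @δ q.2.2 * g) b ⊗ₜ[k] ιs k (q, g) := by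
  induction b using Finsupp.induction_linear with
  | zero => simp
  | add x y hx hy => simp only [TensorProduct.add_tmul, map_add, hx, hy]
  | single r c =>
    rw [single_eq_smul_ιp, ← TensorProduct.smul_tmul', map_smul, map_smul,
      weightTwist_ιp_tmul_ιp, embG_ιp, TensorProduct.smul_tmul']

def IsHomogeneous (δ : ∀ {a b : V}, (a ⟶ b) → G) (h : G) (c : PathCoalg k V) : Prop :=
  ∀ t ∈ c.support, wt @δ t.2.2 = h

theorem weightTwist_tmul_of_isHomogeneous (δ : ∀ {a b : V}, (a ⟶ b) → G) (g h : G)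
    (b c : PathCoalg k V) (hc : IsHomogeneous k @δ h c) :
    weightTwist @δ g (b ⊗ₜ[k] c) = embG k (h * g) b ⊗ₜ[k] embG k g c := by
  conv_lhs => rw [← Finsupp.sum_single c]
  conv_rhs => rw [← Finsupp.sum_single c]
  simp only [Finsupp.sum, TensorProduct.tmul_sum, map_sum]
  refine Finset.sum_congr rfl fun q hq => ?_
  rw [single_eq_smul_ιp, TensorProduct.tmul_smul, map_smul, map_smul, weightTwist_tmul_ιp,
    embG_ιp, hc q hq, TensorProduct.tmul_smul]

theorem isHomogeneous_filter (δ : ∀ {a b : V}, (a ⟶ b) → G) (h : G) (x : PathCoalg k V) :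
    IsHomogeneous k @δ h (x.filter fun t => wt @δ t.2.2 = h) := fun t ht => by
  rw [Finsupp.support_filter, Finset.mem_filter] at ht
  exact ht.2

theorem sum_filter_wt (δ : ∀ {a b : V}, (a ⟶ b) → G) (x : PathCoalg k V) :
    ∑ h ∈ x.support.image (fun t => wt @δ t.2.2), x.filter (fun t => wt @δ t.2.2 = h) = x := by
  ext t
  rw [Finset.sum_apply']
  simp only [Finsupp.filter_apply]
  by_cases ht : x t = 0
  · simp [ht]
  · rw [Finset.sum_ite_eq, if_pos (Finset.mem_image_of_mem _ (Finsupp.mem_support_iff.2 ht))]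

variable {B : Submodule k (PathCoalg k V)}

theorem embG_mem_BsmashG (δ : ∀ {a b : V}, (a ⟶ b) → G)
    (hhom : ∀ x ∈ B, ∀ g : G, x.filter (fun t : PathsIn V => wt @δ t.2.2 = g) ∈ B)
    {b : PathCoalg k V} (hb : b ∈ B) (g : G) :
    embG k g b ∈ BsmashG k @δ B := by
  rw [← sum_filter_wt k @δ b, map_sum]
  exact Submodule.sum_mem _ fun h _ =>
    Submodule.subset_span ⟨g, h, _, hhom b hb h, isHomogeneous_filter k @δ h b, rfl⟩

theorem weightTwist_mem_tsub_BsmashG (δ : ∀ {a b : V}, (a ⟶ b) → G)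
    (hhom : ∀ x ∈ B, ∀ g : G, x.filter (fun t : PathsIn V => wt @δ t.2.2 = g) ∈ B)
    (g : G) {y : PathCoalg k V ⊗[k] PathCoalg k V} (hy : y ∈ tsub k B B) :
    weightTwist @δ g y ∈ tsub k (BsmashG k @δ B) (BsmashG k @δ B) := by
  suffices h : tsub k B B ≤ (tsub k (BsmashG k @δ B) (BsmashG k @δ B)).comap (weightTwist @δ g)
    from h hy
  refine Submodule.span_le.2 ?_
  rintro _ ⟨b, hb, c, hc, rfl⟩
  rw [SetLike.mem_coe, Submodule.mem_comap, ← sum_filter_wt k @δ c, TensorProduct.tmul_sum,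
    map_sum]
  refine Submodule.sum_mem _ fun h _ => ?_
  rw [weightTwist_tmul_of_isHomogeneous k @δ g h b _ (isHomogeneous_filter k @δ h c)]
  exact Submodule.subset_span ⟨_, embG_mem_BsmashG k @δ hhom hb _,
    _, embG_mem_BsmashG k @δ hhom (hhom c hc h) g, rfl⟩

theorem smashDelta_mem_tsub_BsmashG (δ : ∀ {a b : V}, (a ⟶ b) → G)
    (hsub : ∀ x ∈ B, ΔP k x ∈ tsub k B B)
    (hhom : ∀ x ∈ B, ∀ g : G, x.filter (fun t : PathsIn V => wt @δ t.2.2 = g) ∈ B)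
    {x : SmashCoalg k V G} (hx : x ∈ BsmashG k @δ B) :
    smashDelta k @δ x ∈ tsub k (BsmashG k @δ B) (BsmashG k @δ B) := by
  suffices h : BsmashG k @δ B
      ≤ (tsub k (BsmashG k @δ B) (BsmashG k @δ B)).comap (smashDelta k @δ) from h hx
  refine Submodule.span_le.2 ?_
  rintro _ ⟨g, -, b, hb, -, rfl⟩
  rw [SetLike.mem_coe, Submodule.mem_comap, smashDelta_embG]
  exact weightTwist_mem_tsub_BsmashG k @δ hhom g (hsub b hb)

theorem map_smashProj_BsmashG (δ : ∀ {a b : V}, (a ⟶ b) → G)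
    (hhom : ∀ x ∈ B, ∀ g : G, x.filter (fun t : PathsIn V => wt @δ t.2.2 = g) ∈ B) :
    (BsmashG k @δ B).map (smashProj k) = B := by
  refine le_antisymm ?_ fun b hb =>
    ⟨embG k 1 b, embG_mem_BsmashG k @δ hhom hb 1, smashProj_embG k 1 b⟩
  rw [Submodule.map_le_iff_le_comap, BsmashG, Submodule.span_le]
  rintro _ ⟨g, -, b, hb, -, rfl⟩
  rwa [SetLike.mem_coe, Submodule.mem_comap, smashProj_embG]

end

theorem homogeneous_subcoalgebra_smash (δ : ∀ {a b : V}, (a ⟶ b) → G)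
    (B : Submodule k (PathCoalg k V))
    -- `B` is a subcoalgebra
    (hsub : ∀ x ∈ B, ΔP k x ∈ tsub k B B)
    -- `B` is homogeneous
    (hhom : ∀ x ∈ B, ∀ g : G, x.filter (fun t : PathsIn V => wt @δ t.2.2 = g) ∈ B) :
    -- `B ⋊ kG` is a subcoalgebra of `kQ ⋊ kG` ...
    (∀ x ∈ BsmashG k @δ B, smashDelta k @δ x ∈ tsub k (BsmashG k @δ B) (BsmashG k @δ B))
    -- ... and the (coalgebra) projection maps it onto `B`
    ∧ Submodule.map (smashProj k (G := G)) (BsmashG k @δ B) = B :=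
  ⟨fun _ hx => smashDelta_mem_tsub_BsmashG k @δ hsub hhom hx, map_smashProj_BsmashG k @δ hhom⟩
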